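/- arXiv:2305.12211 — 5 statements merged into one kernel-verified Lean document; each statement's English description precedes it below -/
import Mathlib

section
/- Let T be θ-averaged with S = (1/θ)(I - T) being 1/2-cocoercive, and let v be the infimal displacement vector of T (the minimum-norm element of the closure of the range of I - T). If S y - S z lies in the cone C_δ = {x : ⟨v, x⟩ ≥ sin(δ)‖v‖‖x‖} with S y ≠ S z for some δ ∈ (0, π/2), then ⟨-v, y - z⟩ ≤ cos(δ)‖v‖‖y - z‖. -/
/-!
Write `u = S y - S z` and `x = y - z`. The cone condition says that the angle between `v` and `u`
is at most `π/2 - δ`, and monotonicity of `S` (a consequence of cocoercivity) says that the angle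
between `u` and `x` is at most `π/2`. By the triangle inequality for angles, the angle between
`v` and `x` is at most `π - δ`, i.e. the angle between `-v` and `x` is at least `δ`.
-/

open Real InnerProductGeometry
open scoped RealInnerProductSpace

section

variable {V : Type*} [NormedAddCommGroup V] [InnerProductSpace ℝ V]

theorem angle_le_of_cos_mul_le_inner {x y : V} {α : ℝ} (hx : x ≠ 0) (hy : y ≠ 0)
    (hα₀ : 0 ≤ α) (h : cos α * (‖x‖ * ‖y‖) ≤ ⟪x, y⟫) : angle x y ≤ α := by
  by_contra! hlt
  have hcos : cos (angle x y) < cos α := cos_lt_cos_of_nonneg_of_le_pi hα₀ (angle_le_pi x y) hlt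
  have hpos : 0 < ‖x‖ * ‖y‖ := by positivity
  have := mul_lt_mul_of_pos_right hcos hpos
  rw [cos_angle_mul_norm_mul_norm] at this
  linarith

theorem angle_le_pi_div_two_of_inner_nonneg {x y : V} (h : 0 ≤ ⟪x, y⟫) :
    angle x y ≤ π / 2 :=
  arccos_le_pi_div_two.mpr (div_nonneg h (by positivity))

theorem inner_le_cos_mul_of_le_angle {x y : V} {α : ℝ} (hα₀ : 0 ≤ α) (h : α ≤ angle x y) :
    ⟪x, y⟫ ≤ cos α * (‖x‖ * ‖y‖) := by
  rw [← cos_angle_mul_norm_mul_norm]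
  gcongr
  exact cos_le_cos_of_nonneg_of_le_pi hα₀ (angle_le_pi x y) h

theorem inner_neg_le_cos_mul_of_sin_mul_le_inner {v u x : V} {δ : ℝ} (hu : u ≠ 0)
    (hδ₀ : 0 ≤ δ) (hδ : δ ≤ π / 2) (hvu : sin δ * ‖v‖ * ‖u‖ ≤ ⟪v, u⟫)
    (hux : 0 ≤ ⟪u, x⟫) : ⟪-v, x⟫ ≤ cos δ * ‖v‖ * ‖x‖ := by
  rcases eq_or_ne v 0 with rfl | hv
  · simp
  have hangle_vu : angle v u ≤ π / 2 - δ :=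
    angle_le_of_cos_mul_le_inner hv hu (by linarith) (by rw [cos_pi_div_two_sub]; linarith)
  have hangle_vx : angle v x ≤ π - δ := by
    linarith [angle_le_angle_add_angle v u x, angle_le_pi_div_two_of_inner_nonneg hux]
  have hangle : δ ≤ angle (-v) x := by
    rw [angle_neg_left]
    linarith
  rw [mul_assoc, ← norm_neg v]
  exact inner_le_cos_mul_of_le_angle hδ₀ hangle

end

theorem stmt2_general {H : Type*} [NormedAddCommGroup H] [InnerProductSpace ℝ H]
    (S : H → H)
    (hcoco : ∀ x y : H,
      (inner ℝ (S x - S y) (x - y) : ℝ) ≥ (1 / 2) * ‖S x - S y‖ ^ 2)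
    (v : H)
    (δ : ℝ) (hδ : δ ∈ Set.Ioo 0 (Real.pi / 2))
    (y z : H)
    (hcone : (inner ℝ v (S y - S z) : ℝ) ≥ Real.sin δ * ‖v‖ * ‖S y - S z‖)
    (hne : S y ≠ S z) :
    (inner ℝ (-v) (y - z) : ℝ) ≤ Real.cos δ * ‖v‖ * ‖y - z‖ := by
  have hmono : 0 ≤ (inner ℝ (S y - S z) (y - z) : ℝ) := le_trans (by positivity) (hcoco y z)
  exact inner_neg_le_cos_mul_of_sin_mul_le_inner (sub_ne_zero.mpr hne) hδ.1.le hδ.2.le hcone hmono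

/-- Lemma on the cone `C_δ`: if `S y - S z ∈ C_δ` and `S y ≠ S z`, then
`⟨-v, y - z⟩ ≤ cos δ ‖v‖ ‖y - z‖`, where `v` is the infimal displacement vector. -/
theorem stmt2 {H : Type*} [NormedAddCommGroup H] [InnerProductSpace ℝ H]
    (θ : ℝ) (hθ : θ ∈ Set.Ioc (0 : ℝ) 1) (T S : H → H)
    (hS : ∀ x, S x = (1 / θ) • (x - T x))
    (hcoco : ∀ x y : H,
      (inner ℝ (S x - S y) (x - y) : ℝ) ≥ (1 / 2) * ‖S x - S y‖ ^ 2)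
    (v : H)
    (hv_mem : v ∈ closure (Set.range fun x => x - T x))
    (hv_min : ∀ w ∈ closure (Set.range fun x => x - T x), ‖v‖ ≤ ‖w‖)
    (δ : ℝ) (hδ : δ ∈ Set.Ioo 0 (Real.pi / 2))
    (y z : H)
    (hcone : (inner ℝ v (S y - S z) : ℝ) ≥ Real.sin δ * ‖v‖ * ‖S y - S z‖)
    (hne : S y ≠ S z) :
    (inner ℝ (-v) (y - z) : ℝ) ≤ Real.cos δ * ‖v‖ * ‖y - z‖ :=
  stmt2_general S hcoco v δ hδ y z hcone hne
end

section
/- Let T be θ-averaged with S = (1/θ)(I - T) being 1/2-cocoercive with infimal displacement vector v. Suppose a sequence (y^k) in H satisfies y^k / k → -γ v strongly for some γ > 0. Then for any δ ∈ (0, π/2) and any z ∈ H, there exists N such that for all k > N, ⟨v, S y^k - S z⟩ ≤ ‖v‖ ‖S y^k - S z‖ sin δ. -/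
/-!
Cocoercivity makes `S` monotone, so with `u = S yᵏ - S z` and `wᵏ = (yᵏ - z)/k` we have `⟨u, wᵏ⟩ ≥ 0`, hence
`γ ⟨u, v⟩ ≤ ⟨u, wᵏ + γ v⟩ ≤ ‖u‖ ‖wᵏ + γ v‖`, and `wᵏ + γ v → 0`.
-/

open Filter Topology
open scoped RealInnerProductSpace

section Monotone

variable {H : Type*} [NormedAddCommGroup H] [InnerProductSpace ℝ H]

lemma mul_real_inner_le_norm_mul_norm_add_smul {u w : H} (v : H) (γ : ℝ) (huw : 0 ≤ ⟪u, w⟫) :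
    γ * ⟪u, v⟫ ≤ ‖u‖ * ‖w + γ • v‖ :=
  calc γ * ⟪u, v⟫ ≤ ⟪u, w + γ • v⟫ := by
        rw [inner_add_right, real_inner_smul_right]; linarith
    _ ≤ ‖u‖ * ‖w + γ • v‖ := real_inner_le_norm _ _

lemma tendsto_inv_natCast_smul_sub {y : ℕ → H} {a : H}
    (h : Tendsto (fun k : ℕ => (k : ℝ)⁻¹ • y k) atTop (𝓝 a)) (z : H) :
    Tendsto (fun k : ℕ => (k : ℝ)⁻¹ • (y k - z)) atTop (𝓝 a) := by
  simpa [smul_sub] using h.sub ((tendsto_inv_atTop_nhds_zero_nat (𝕜 := ℝ)).smul_const z)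

theorem eventually_real_inner_le_mul_norm_of_monotone {S : H → H}
    (hmono : ∀ x x', 0 ≤ ⟪S x - S x', x - x'⟫) {y : ℕ → H} {v : H} {γ : ℝ} (hγ : 0 < γ)
    (hlim : Tendsto (fun k : ℕ => (k : ℝ)⁻¹ • y k) atTop (𝓝 ((-γ) • v))) (z : H)
    {ε : ℝ} (hε : 0 < ε) :
    ∀ᶠ k in atTop, ⟪v, S (y k) - S z⟫ ≤ ε * ‖S (y k) - S z‖ := by
  have hdist : Tendsto (fun k : ℕ => ‖(k : ℝ)⁻¹ • (y k - z) + γ • v‖) atTop (𝓝 0) := by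
    simpa using ((tendsto_inv_natCast_smul_sub hlim z).add_const (γ • v)).norm
  filter_upwards [hdist.eventually_lt_const (mul_pos hγ hε)] with k hk
  set u := S (y k) - S z
  have hnonneg : 0 ≤ ⟪u, (k : ℝ)⁻¹ • (y k - z)⟫ := by
    rw [real_inner_smul_right]
    exact mul_nonneg (by positivity) (hmono _ _)
  refine le_of_mul_le_mul_left ?_ hγ
  calc γ * ⟪v, u⟫ = γ * ⟪u, v⟫ := by rw [real_inner_comm]
    _ ≤ ‖u‖ * ‖(k : ℝ)⁻¹ • (y k - z) + γ • v‖ :=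
        mul_real_inner_le_norm_mul_norm_add_smul v γ hnonneg
    _ ≤ ‖u‖ * (γ * ε) := by gcongr
    _ = γ * (ε * ‖u‖) := by ring

end Monotone

theorem stmt3_general {H : Type*} [NormedAddCommGroup H] [InnerProductSpace ℝ H]
    (S : H → H)
    (hcoco : ∀ x y : H,
      (inner ℝ (S x - S y) (x - y) : ℝ) ≥ (1 / 2) * ‖S x - S y‖ ^ 2)
    (v : H)
    (y : ℕ → H) (γ : ℝ) (hγ : 0 < γ)
    (hlim : Filter.Tendsto (fun k : ℕ => (k : ℝ)⁻¹ • y k) Filter.atTop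
      (nhds ((-γ) • v)))
    (δ : ℝ) (hδ : δ ∈ Set.Ioo 0 (Real.pi / 2)) (z : H) :
    ∃ N : ℕ, ∀ k > N,
      (inner ℝ v (S (y k) - S z) : ℝ) ≤ ‖v‖ * ‖S (y k) - S z‖ * Real.sin δ := by
  obtain ⟨hδ0, hδπ⟩ := hδ
  rcases eq_or_ne v 0 with rfl | hv
  · exact ⟨0, fun k _ => by simp⟩
  have hsin : 0 < Real.sin δ :=
    Real.sin_pos_of_pos_of_lt_pi hδ0 (by linarith [Real.pi_pos])
  have hmono : ∀ x x', 0 ≤ ⟪S x - S x', x - x'⟫ := fun x x' => (hcoco x x').trans' (by positivity)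
  obtain ⟨N, hN⟩ := eventually_atTop.1 <|
    eventually_real_inner_le_mul_norm_of_monotone hmono hγ hlim z
      (mul_pos (norm_pos_iff.2 hv) hsin)
  exact ⟨N, fun k hk => (hN k hk.le).trans_eq (by ring)⟩

/-- If `yᵏ/k → -γ v` strongly with `γ > 0`, then for any `δ ∈ (0, π/2)` and `z`,
eventually `⟨v, S yᵏ - S z⟩ ≤ ‖v‖ ‖S yᵏ - S z‖ sin δ`. -/
theorem stmt3 {H : Type*} [NormedAddCommGroup H] [InnerProductSpace ℝ H]
    (θ : ℝ) (hθ : θ ∈ Set.Ioc (0 : ℝ) 1) (T S : H → H)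
    (hS : ∀ x, S x = (1 / θ) • (x - T x))
    (hcoco : ∀ x y : H,
      (inner ℝ (S x - S y) (x - y) : ℝ) ≥ (1 / 2) * ‖S x - S y‖ ^ 2)
    (v : H)
    (hv_mem : v ∈ closure (Set.range fun x => x - T x))
    (hv_min : ∀ w ∈ closure (Set.range fun x => x - T x), ‖v‖ ≤ ‖w‖)
    (y : ℕ → H) (γ : ℝ) (hγ : 0 < γ)
    (hlim : Filter.Tendsto (fun k : ℕ => (k : ℝ)⁻¹ • y k) Filter.atTop
      (nhds ((-γ) • v)))
    (δ : ℝ) (hδ : δ ∈ Set.Ioo 0 (Real.pi / 2)) (z : H) :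
    ∃ N : ℕ, ∀ k > N,
      (inner ℝ v (S (y k) - S z) : ℝ) ≤ ‖v‖ * ‖S (y k) - S z‖ * Real.sin δ :=
  stmt3_general S hcoco v y γ hγ hlim δ hδ z
end

section
/- Under the setup of the randomized coordinate update with T_I = I - θ S_I, S 1/2-cocoercive with respect to ‖·‖_M, E[I] = α·1, and E[‖u_I‖_M²] ≤ β‖u‖_M², define T̄ = I - αθS. Then for all x, z ∈ H: E_I[‖T_I x - T̄ z‖_M²] ≤ ‖x - z‖_M² + θ²(β - α²)‖Sx‖_M² - αθ(1 - αθ)‖Sx - Sz‖_M². -/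
/-!
Write `a = S x`, `b = S z` and `v = x - z + αθ b`, so that the integrand is `‖v - θ a_I‖²_M`.
Expanding the square, the cross term has expectation `α⟨a, v⟩_M` because `E[I] = α·1`, and the
quadratic term is at most `β‖a‖²_M`; completing the square gives
`E‖v - θ a_I‖²_M ≤ ‖v - αθ a‖²_M + θ²(β - α²)‖a‖²_M`. Finally `v - αθ a = (x - z) - αθ (a - b)`,
and cocoercivity `⟨a - b, x - z⟩_M ≥ ½‖a - b‖²_M` turns the expansion of its square into
`‖x - z‖²_M - αθ(1 - αθ)‖a - b‖²_M`.
-/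

open MeasureTheory

/-- The `M`-inner product induced by a positive definite self-adjoint operator `M`. -/
noncomputable def Minner {H : Type*} [NormedAddCommGroup H] [InnerProductSpace ℝ H]
    (M : H →L[ℝ] H) (x y : H) : ℝ := inner ℝ x (M y)

/-- The `M`-norm. -/
noncomputable def Mnorm {H : Type*} [NormedAddCommGroup H] [InnerProductSpace ℝ H]
    (M : H →L[ℝ] H) (x : H) : ℝ := Real.sqrt (Minner M x x)

/-- Coordinatewise selection `u_I` of a vector `u` by a selection vector `c`. -/
noncomputable def sel {m : ℕ} {Hi : Fin m → Type*} [∀ i, NormedAddCommGroup (Hi i)]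
    [∀ i, InnerProductSpace ℝ (Hi i)] (c : Fin m → ℝ) (u : PiLp 2 Hi) : PiLp 2 Hi :=
  WithLp.toLp 2 (fun i => c i • u i)

section MNorm

variable {H : Type*} [NormedAddCommGroup H] [InnerProductSpace ℝ H] {M : H →L[ℝ] H}

lemma continuous_Mnorm : Continuous (Mnorm M) :=
  Real.continuous_sqrt.comp (continuous_id.inner M.continuous)

lemma Mnorm_sq (hMpos : ∀ x : H, x ≠ 0 → 0 < (inner ℝ x (M x) : ℝ)) (u : H) :
    Mnorm M u ^ 2 = Minner M u u := by
  refine Real.sq_sqrt ?_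
  rcases eq_or_ne u 0 with rfl | hu
  · simp [Minner]
  · exact (hMpos u hu).le

lemma Mnorm_sub_smul_sq (hMsym : ∀ x y : H, (inner ℝ (M x) y : ℝ) = inner ℝ x (M y))
    (hMpos : ∀ x : H, x ≠ 0 → 0 < (inner ℝ x (M x) : ℝ)) (v w : H) (t : ℝ) :
    Mnorm M (v - t • w) ^ 2 = Mnorm M v ^ 2 - 2 * t * Minner M w v + t ^ 2 * Mnorm M w ^ 2 := by
  have hcomm : Minner M v w = Minner M w v := by
    rw [Minner, Minner, ← hMsym, real_inner_comm]
  simp only [Mnorm_sq hMpos, Minner, map_sub, map_smul, inner_sub_left, inner_sub_right,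
    real_inner_smul_left, real_inner_smul_right] at hcomm ⊢
  rw [hcomm]
  ring

lemma Mnorm_sub_smul_sq_le_of_cocoercive
    (hMsym : ∀ x y : H, (inner ℝ (M x) y : ℝ) = inner ℝ x (M y))
    (hMpos : ∀ x : H, x ≠ 0 → 0 < (inner ℝ x (M x) : ℝ)) {u w : H} {t : ℝ} (ht : 0 ≤ t)
    (hcoco : Minner M w u ≥ 1 / 2 * Mnorm M w ^ 2) :
    Mnorm M (u - t • w) ^ 2 ≤ Mnorm M u ^ 2 - t * (1 - t) * Mnorm M w ^ 2 := by
  rw [Mnorm_sub_smul_sq hMsym hMpos]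
  nlinarith [mul_le_mul_of_nonneg_left hcoco ht]

end MNorm

lemma integrable_comp_of_mapsTo_compact {Ω E F : Type*} [MeasurableSpace Ω] {μ : Measure Ω}
    [IsFiniteMeasure μ] [TopologicalSpace E] [MeasurableSpace E] [OpensMeasurableSpace E]
    [NormedAddCommGroup F] [MeasurableSpace F] [BorelSpace F] [SecondCountableTopology F]
    {K : Set E} (hK : IsCompact K) {g : E → F} (hg : Continuous g)
    {f : Ω → E} (hf : Measurable f) (hfK : ∀ ω, f ω ∈ K) : Integrable (fun ω => g (f ω)) μ := by
  obtain ⟨C, hC⟩ := hK.exists_bound_of_continuousOn hg.continuousOn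
  exact Integrable.of_bound (hg.measurable.comp hf).aestronglyMeasurable C
    (ae_of_all _ fun ω => hC _ (hfK ω))

section Selection

variable {m : ℕ} {Hi : Fin m → Type*} [∀ i, NormedAddCommGroup (Hi i)]
  [∀ i, InnerProductSpace ℝ (Hi i)] {M : PiLp 2 Hi →L[ℝ] PiLp 2 Hi}

lemma continuous_sel (u : PiLp 2 Hi) : Continuous fun c : Fin m → ℝ => sel c u :=
  (PiLp.continuous_toLp 2 Hi).comp
    (continuous_pi fun i => (continuous_apply i).smul continuous_const)

lemma Minner_sel (c : Fin m → ℝ) (u v : PiLp 2 Hi) :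
    Minner M (sel c u) v = ∑ i, c i * inner ℝ (u i) ((M v) i) := by
  simp only [Minner, sel, PiLp.inner_apply, real_inner_smul_left]

variable {Ω : Type*} [MeasurableSpace Ω] {μ : Measure Ω} {I : Ω → Fin m → ℝ} {α : ℝ}

lemma integral_Minner_sel (hI : ∀ i, Integrable (fun ω => I ω i) μ)
    (hImean : ∀ i, ∫ ω, I ω i ∂μ = α) (u v : PiLp 2 Hi) :
    ∫ ω, Minner M (sel (I ω) u) v ∂μ = α * Minner M u v := by
  simp only [Minner_sel]
  rw [integral_finsetSum _ fun i _ => (hI i).mul_const _]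
  simp only [integral_mul_const, hImean, ← Finset.mul_sum, Minner, PiLp.inner_apply]

variable [IsProbabilityMeasure μ]

lemma integral_Mnorm_sub_smul_sel_sq_le
    (hMsym : ∀ x y : PiLp 2 Hi, (inner ℝ (M x) y : ℝ) = inner ℝ x (M y))
    (hMpos : ∀ x : PiLp 2 Hi, x ≠ 0 → 0 < (inner ℝ x (M x) : ℝ))
    (hImeas : Measurable I) (hIrange : ∀ ω i, I ω i ∈ Set.Icc (0 : ℝ) 1)
    (hImean : ∀ i, ∫ ω, I ω i ∂μ = α) {β : ℝ} {a : PiLp 2 Hi}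
    (hβ : ∫ ω, Mnorm M (sel (I ω) a) ^ 2 ∂μ ≤ β * Mnorm M a ^ 2) (v : PiLp 2 Hi) (θ : ℝ) :
    ∫ ω, Mnorm M (v - θ • sel (I ω) a) ^ 2 ∂μ
      ≤ Mnorm M (v - (α * θ) • a) ^ 2 + θ ^ 2 * (β - α ^ 2) * Mnorm M a ^ 2 := by
  have hIcube : ∀ ω, I ω ∈ Set.Icc 0 1 := fun ω =>
    ⟨fun i => (hIrange ω i).1, fun i => (hIrange ω i).2⟩
  have hI : ∀ i, Integrable (fun ω => I ω i) μ := fun i =>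
    integrable_comp_of_mapsTo_compact isCompact_Icc (continuous_apply i) hImeas hIcube
  have hcross : Integrable (fun ω => Minner M (sel (I ω) a) v) μ := by
    simp only [Minner_sel]
    exact integrable_finsetSum _ fun i _ => (hI i).mul_const _
  have hsquare : Integrable (fun ω => Mnorm M (sel (I ω) a) ^ 2) μ :=
    integrable_comp_of_mapsTo_compact isCompact_Icc
      ((continuous_Mnorm.comp (continuous_sel a)).pow 2) hImeas hIcube
  have hlinear : Integrable (fun ω => Mnorm M v ^ 2 - 2 * θ * Minner M (sel (I ω) a) v) μ :=
    (integrable_const _).sub (hcross.const_mul _)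
  calc ∫ ω, Mnorm M (v - θ • sel (I ω) a) ^ 2 ∂μ
      = ∫ ω, Mnorm M v ^ 2 - 2 * θ * Minner M (sel (I ω) a) v
          + θ ^ 2 * Mnorm M (sel (I ω) a) ^ 2 ∂μ := by
        simp only [Mnorm_sub_smul_sq hMsym hMpos]
    _ = Mnorm M v ^ 2 - 2 * θ * (α * Minner M a v)
          + θ ^ 2 * ∫ ω, Mnorm M (sel (I ω) a) ^ 2 ∂μ := by
        rw [integral_add hlinear (hsquare.const_mul _),
          integral_sub (integrable_const _) (hcross.const_mul _), integral_const_mul,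
          integral_const_mul, integral_const, integral_Minner_sel hI hImean]
        simp
    _ ≤ Mnorm M v ^ 2 - 2 * θ * (α * Minner M a v) + θ ^ 2 * (β * Mnorm M a ^ 2) := by
        gcongr
    _ = Mnorm M (v - (α * θ) • a) ^ 2 + θ ^ 2 * (β - α ^ 2) * Mnorm M a ^ 2 := by
        rw [Mnorm_sub_smul_sq hMsym hMpos]
        ring

end Selection

theorem stmt6_general {m : ℕ} {Hi : Fin m → Type*} [∀ i, NormedAddCommGroup (Hi i)]
    [∀ i, InnerProductSpace ℝ (Hi i)]
    {Ω : Type*} [MeasurableSpace Ω] (μ : Measure Ω) [IsProbabilityMeasure μ]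
    (M : PiLp 2 Hi →L[ℝ] PiLp 2 Hi)
    (hMsym : ∀ x y : PiLp 2 Hi, (inner ℝ (M x) y : ℝ) = inner ℝ x (M y))
    (hMpos : ∀ x : PiLp 2 Hi, x ≠ 0 → 0 < (inner ℝ x (M x) : ℝ))
    (θ : ℝ) (hθ : θ ∈ Set.Ioc (0 : ℝ) 1)
    (S : PiLp 2 Hi → PiLp 2 Hi)
    (hcoco : ∀ x y, Minner M (S x - S y) (x - y) ≥ (1 / 2) * (Mnorm M (S x - S y)) ^ 2)
    (α β : ℝ) (hα : α ∈ Set.Ioc (0 : ℝ) 1)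
    (I : Ω → Fin m → ℝ) (hImeas : Measurable I)
    (hIrange : ∀ ω i, I ω i ∈ Set.Icc (0 : ℝ) 1)
    (hImean : ∀ i, ∫ ω, I ω i ∂μ = α)
    (hβ : ∀ u : PiLp 2 Hi, ∫ ω, (Mnorm M (sel (I ω) u)) ^ 2 ∂μ ≤ β * (Mnorm M u) ^ 2)
    (x z : PiLp 2 Hi) :
    ∫ ω, (Mnorm M ((x - θ • sel (I ω) (S x)) - (z - (α * θ) • S z))) ^ 2 ∂μ
      ≤ (Mnorm M (x - z)) ^ 2 + θ ^ 2 * (β - α ^ 2) * (Mnorm M (S x)) ^ 2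
        - α * θ * (1 - α * θ) * (Mnorm M (S x - S z)) ^ 2 := by
  have hstep : ∀ ω, (x - θ • sel (I ω) (S x)) - (z - (α * θ) • S z)
      = (x - z + (α * θ) • S z) - θ • sel (I ω) (S x) := fun ω => by module
  have haveraged : x - z + (α * θ) • S z - (α * θ) • S x = (x - z) - (α * θ) • (S x - S z) := by
    module
  have hrandom := integral_Mnorm_sub_smul_sel_sq_le hMsym hMpos hImeas hIrange hImean
    (hβ (S x)) (x - z + (α * θ) • S z) θ
  have hcontract := Mnorm_sub_smul_sq_le_of_cocoercive hMsym hMpos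
    (mul_nonneg hα.1.le hθ.1.le) (hcoco x z)
  rw [haveraged] at hrandom
  simp only [hstep]
  linarith

/-- One-step comparison bound between the randomized-coordinate update `T_I x`
and the averaged full update `T̄ z = z - αθ S z`. -/
theorem stmt6 {m : ℕ} {Hi : Fin m → Type*} [∀ i, NormedAddCommGroup (Hi i)]
    [∀ i, InnerProductSpace ℝ (Hi i)]
    {Ω : Type*} [MeasurableSpace Ω] (μ : Measure Ω) [IsProbabilityMeasure μ]
    (M : PiLp 2 Hi →L[ℝ] PiLp 2 Hi)
    (hMsym : ∀ x y : PiLp 2 Hi, (inner ℝ (M x) y : ℝ) = inner ℝ x (M y))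
    (hMpos : ∀ x : PiLp 2 Hi, x ≠ 0 → 0 < (inner ℝ x (M x) : ℝ))
    (θ : ℝ) (hθ : θ ∈ Set.Ioc (0 : ℝ) 1)
    (T S : PiLp 2 Hi → PiLp 2 Hi)
    (hS : ∀ x, S x = (1 / θ) • (x - T x))
    (hcoco : ∀ x y, Minner M (S x - S y) (x - y) ≥ (1 / 2) * (Mnorm M (S x - S y)) ^ 2)
    (α β : ℝ) (hα : α ∈ Set.Ioc (0 : ℝ) 1)
    (I : Ω → Fin m → ℝ) (hImeas : Measurable I)
    (hIrange : ∀ ω i, I ω i ∈ Set.Icc (0 : ℝ) 1)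
    (hImean : ∀ i, ∫ ω, I ω i ∂μ = α)
    (hβ : ∀ u : PiLp 2 Hi, ∫ ω, (Mnorm M (sel (I ω) u)) ^ 2 ∂μ ≤ β * (Mnorm M u) ^ 2)
    (x z : PiLp 2 Hi) :
    ∫ ω, (Mnorm M ((x - θ • sel (I ω) (S x)) - (z - (α * θ) • S z))) ^ 2 ∂μ
      ≤ (Mnorm M (x - z)) ^ 2 + θ ^ 2 * (β - α ^ 2) * (Mnorm M (S x)) ^ 2
        - α * θ * (1 - α * θ) * (Mnorm M (S x - S z)) ^ 2 :=
  stmt6_general μ M hMsym hMpos θ hθ S hcoco α β hα I hImeas hIrange hImean hβ x z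
end

section
/- If c_F < √((1-θ)/(1-αθ)) strictly, with θ ∈ (0,1], α ∈ (0,1], then β = α² + (α-α²)/(1-c_F²) satisfies βθ < α strictly. -/
/-!
Clearing the positive denominators `1 - c_F²` and `α`, the inequality `βθ < α` is equivalent to
`c_F² (1 - αθ) < 1 - θ`, which is the hypothesis on `c_F` squared, once we know `1 - αθ > 0`.
That positivity comes from the hypothesis itself: `(1 - θ) / (1 - αθ) > c_F² ≥ 0` with
`1 - θ ≥ 0` forces the denominator to be positive.
-/

theorem mul_lt_of_lt_div_of_nonneg {t a b : ℝ} (ht : 0 ≤ t) (ha : 0 ≤ a) (h : t < a / b) :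
    t * b < a := by
  have hb : 0 < b := by
    rcases div_pos_iff.mp (ht.trans_lt h) with ⟨-, hb⟩ | ⟨ha', -⟩
    · exact hb
    · exact absurd ha ha'.not_ge
  exact (lt_div_iff₀ hb).mp h

theorem mul_lt_iff_sq_mul_lt {α θ c : ℝ} (hα : 0 < α) (hc : c ^ 2 < 1) :
    (α ^ 2 + (α - α ^ 2) / (1 - c ^ 2)) * θ < α ↔ c ^ 2 * (1 - α * θ) < 1 - θ := by
  have hd : 0 < 1 - c ^ 2 := sub_pos.mpr hc
  have hβ : α ^ 2 + (α - α ^ 2) / (1 - c ^ 2) = α * (1 - c ^ 2 * α) / (1 - c ^ 2) := by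
    field_simp
    ring
  rw [hβ, div_mul_eq_mul_div, div_lt_iff₀ hd, mul_assoc, mul_lt_mul_iff_right₀ hα]
  constructor <;> intro h <;> linarith

/-- If `c_F < √((1-θ)/(1-αθ))` strictly, then `β = α² + (α-α²)/(1-c_F²)`
satisfies `βθ < α` strictly. -/
theorem stmt10 (θ α cF : ℝ) (hθ : θ ∈ Set.Ioc (0 : ℝ) 1)
    (hα : α ∈ Set.Ioc (0 : ℝ) 1) (hcF0 : 0 ≤ cF) (hcF1 : cF < 1)
    (h : cF < Real.sqrt ((1 - θ) / (1 - α * θ))) :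
    (α ^ 2 + (α - α ^ 2) / (1 - cF ^ 2)) * θ < α := by
  have hsq : cF ^ 2 < (1 - θ) / (1 - α * θ) := (Real.lt_sqrt hcF0).mp h
  have hcF_sq : cF ^ 2 < 1 := (sq_lt_one_iff₀ hcF0).mpr hcF1
  rw [mul_lt_iff_sq_mul_lt hα.1 hcF_sq]
  exact mul_lt_of_lt_div_of_nonneg (sq_nonneg cF) (sub_nonneg.mpr hθ.2) hsq
end

section
/- Let T : ℝ² → ℝ², T(x,y) = (x - (1+x-y)/2, y - (1+y-x)/2). Consider the randomized coordinate iteration starting from (x⁰,y⁰) = (0,0), where at each step with probability 1/2 only the first coordinate is updated to x - (1+x-y)/2, and with probability 1/2 only the second to y - (1+y-x)/2. Then for all k: E[x^k] = E[y^k] = -k/4, E[(x^k - y^k)²] = (1/3)(1 - 4^{-k}), and E[(x^k)² + (y^k)²] = k²/8 + k/24 + (1/9)(1 - 4^{-k}). In particular the variance of (x^k,y^k) equals k/24 + (1/9)(1 - 4^{-k}). -/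
/-!
The `k`-th iterate is a deterministic function `orbit k` of the first `k` coins, and by
independence these coins are uniformly distributed on `Fin k → Bool`; so every moment is an
average over the `2 ^ k` coin sequences. Averaging over the last coin gives the affine
recursions `E x' = E (3x + y - 1) / 4`, `E y' = E (x + 3y - 1) / 4`,
`E (x' - y')² = (E (x - y)² + 1) / 4` and
`E (x'² + y'²) = E (x² + y²) - E (x - y)² / 4 - (E x + E y) / 2 + 1 / 4`,
which are solved by induction on `k`.
-/

open MeasureTheory ProbabilityTheory Finset

section FairCoins

variable {Ω : Type*} [MeasurableSpace Ω] {μ : Measure Ω} [IsProbabilityMeasure μ]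

lemma measure_preimage_bool_eq_half {X : Ω → Bool} (hX : Measurable X)
    (hfair : μ (X ⁻¹' {true}) = 1 / 2) (t : Bool) : μ (X ⁻¹' {t}) = 2⁻¹ := by
  cases t
  · have hcompl : X ⁻¹' {false} = (X ⁻¹' {true})ᶜ := by ext; simp
    rw [hcompl, prob_compl_eq_one_sub (hX (measurableSet_singleton _)), hfair, one_div,
      ENNReal.one_sub_inv_two]
  · rwa [one_div] at hfair

variable {c : ℕ → Ω → Bool}

lemma measurable_coins (hmeas : ∀ i, Measurable (c i)) (k : ℕ) :
    Measurable fun ω (i : Fin k) => c i ω :=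
  measurable_pi_lambda _ fun i => hmeas i

lemma measure_coins_preimage_singleton (hmeas : ∀ i, Measurable (c i)) (hiid : iIndepFun c μ)
    (hunif : ∀ i, μ (c i ⁻¹' {true}) = 1 / 2) (k : ℕ) (b : Fin k → Bool) :
    μ ((fun ω (i : Fin k) => c i ω) ⁻¹' {b}) = 2⁻¹ ^ k := by
  rw [← Measure.map_apply (measurable_coins hmeas k) (measurableSet_singleton b),
    (hiid.precomp Fin.val_injective).map_fun_eq_pi_map fun i : Fin k => (hmeas i).aemeasurable,
    ← Set.univ_pi_singleton, Measure.pi_pi]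
  simp [Measure.map_apply (hmeas _), measure_preimage_bool_eq_half (hmeas _) (hunif _)]

lemma integral_comp_coins (hmeas : ∀ i, Measurable (c i)) (hiid : iIndepFun c μ)
    (hunif : ∀ i, μ (c i ⁻¹' {true}) = 1 / 2) (k : ℕ) (g : (Fin k → Bool) → ℝ) :
    ∫ ω, g (fun i : Fin k => c i ω) ∂μ = (∑ b, g b) / 2 ^ k := by
  have hV := measurable_coins hmeas k
  rw [← integral_map hV.aemeasurable Measurable.of_discrete.aestronglyMeasurable,
    integral_fintype .of_finite, Finset.sum_div]
  refine Finset.sum_congr rfl fun b _ => ?_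
  rw [measureReal_def, Measure.map_apply hV (measurableSet_singleton b),
    measure_coins_preimage_singleton hmeas hiid hunif]
  simp [div_eq_inv_mul]

end FairCoins

lemma sum_fin_succ_bool {M : Type*} [AddCommMonoid M] (k : ℕ) (f : (Fin (k + 1) → Bool) → M) :
    ∑ b, f b = ∑ b : Fin k → Bool, (f (Fin.snoc b true) + f (Fin.snoc b false)) := by
  rw [← (Fin.snocEquiv fun _ => Bool).sum_comp, Fintype.sum_prod_type_right]
  simp only [Fintype.sum_bool]
  rfl

namespace RandomizedCoordinateIteration

noncomputable section

def stepX (p : ℝ × ℝ) : ℝ × ℝ := (p.1 - (1 + p.1 - p.2) / 2, p.2)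

def stepY (p : ℝ × ℝ) : ℝ × ℝ := (p.1, p.2 - (1 + p.2 - p.1) / 2)

def orbit : (k : ℕ) → (Fin k → Bool) → ℝ × ℝ
  | 0, _ => (0, 0)
  | k + 1, b =>
    if b (Fin.last k) then stepX (orbit k (Fin.init b)) else stepY (orbit k (Fin.init b))

lemma orbit_snoc (k : ℕ) (b : Fin k → Bool) (t : Bool) :
    orbit (k + 1) (Fin.snoc b t) = if t then stepX (orbit k b) else stepY (orbit k b) := by
  simp [orbit]

def mean (k : ℕ) (f : ℝ × ℝ → ℝ) : ℝ := (∑ b : Fin k → Bool, f (orbit k b)) / 2 ^ k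

lemma mean_zero (f : ℝ × ℝ → ℝ) : mean 0 f = f (0, 0) := by
  simp [mean, orbit]

lemma mean_succ_of_eq {f g : ℝ × ℝ → ℝ} (h : ∀ p, (f (stepX p) + f (stepY p)) / 2 = g p)
    (k : ℕ) : mean (k + 1) f = mean k g := by
  simp only [mean, sum_fin_succ_bool, orbit_snoc, if_true, Bool.false_eq_true, if_false,
    ← h, ← Finset.sum_div, pow_succ]
  ring

section Linearity

variable (k : ℕ) (f g : ℝ × ℝ → ℝ)

@[simp] lemma mean_add : mean k (fun p => f p + g p) = mean k f + mean k g := by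
  simp [mean, Finset.sum_add_distrib, add_div]

@[simp] lemma mean_sub : mean k (fun p => f p - g p) = mean k f - mean k g := by
  simp [mean, Finset.sum_sub_distrib, sub_div]

@[simp] lemma mean_const_mul (a : ℝ) : mean k (fun p => a * f p) = a * mean k f := by
  simp [mean, ← Finset.mul_sum, mul_div_assoc]

@[simp] lemma mean_const (a : ℝ) : mean k (fun _ => a) = a := by
  simp [mean]

end Linearity

lemma mean_fst_and_snd (k : ℕ) :
    mean k Prod.fst = -(k : ℝ) / 4 ∧ mean k Prod.snd = -(k : ℝ) / 4 := by
  induction k with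
  | zero => simp [mean_zero]
  | succ k ih =>
    rw [mean_succ_of_eq (g := fun p => 3 / 4 * p.1 + 1 / 4 * p.2 - 1 / 4)
        (fun p => by simp only [stepX, stepY]; ring),
      mean_succ_of_eq (g := fun p => 1 / 4 * p.1 + 3 / 4 * p.2 - 1 / 4)
        (fun p => by simp only [stepX, stepY]; ring)]
    simp only [mean_add, mean_sub, mean_const_mul, mean_const]
    rw [ih.1, ih.2]
    constructor <;> push_cast <;> ring

lemma mean_sq_sub (k : ℕ) :
    mean k (fun p => (p.1 - p.2) ^ 2) = 1 / 3 * (1 - ((4 : ℝ) ^ k)⁻¹) := by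
  induction k with
  | zero => simp [mean_zero]
  | succ k ih =>
    rw [mean_succ_of_eq (g := fun p => 1 / 4 * (p.1 - p.2) ^ 2 + 1 / 4)
      (fun p => by simp only [stepX, stepY]; ring)]
    simp only [mean_add, mean_const_mul, mean_const]
    rw [ih, pow_succ]
    field_simp
    ring

lemma mean_sq_add_sq (k : ℕ) :
    mean k (fun p => p.1 ^ 2 + p.2 ^ 2)
      = (k : ℝ) ^ 2 / 8 + k / 24 + 1 / 9 * (1 - ((4 : ℝ) ^ k)⁻¹) := by
  induction k with
  | zero => simp [mean_zero]
  | succ k ih =>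
    rw [mean_succ_of_eq (g := fun p => (p.1 ^ 2 + p.2 ^ 2) - 1 / 4 * (p.1 - p.2) ^ 2
        - 1 / 2 * p.1 - 1 / 2 * p.2 + 1 / 4)
      (fun p => by simp only [stepX, stepY]; ring)]
    simp only [mean_add, mean_sub, mean_const_mul, mean_const] at ih ⊢
    rw [ih, mean_sq_sub, (mean_fst_and_snd k).1, (mean_fst_and_snd k).2, pow_succ]
    push_cast
    field_simp
    ring

lemma iterate_eq_orbit {Ω : Type*} {c : ℕ → Ω → Bool} {x y : ℕ → Ω → ℝ}
    (hx0 : ∀ ω, x 0 ω = 0) (hy0 : ∀ ω, y 0 ω = 0)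
    (hstep : ∀ k ω, (x (k + 1) ω, y (k + 1) ω) =
      if c k ω then stepX (x k ω, y k ω) else stepY (x k ω, y k ω))
    (k : ℕ) (ω : Ω) : (x k ω, y k ω) = orbit k fun i => c i ω := by
  induction k with
  | zero => simp [orbit, hx0, hy0]
  | succ k ih =>
    rw [hstep, ih]
    rfl

end

end RandomizedCoordinateIteration

open RandomizedCoordinateIteration in
/-- Exact moments of the randomized coordinate iteration for
`T(x,y) = (x - (1+x-y)/2, y - (1+y-x)/2)` started at the origin, and the value
`k/24 + (1/9)(1 - 4⁻ᵏ)` of the variance of `(xᵏ, yᵏ)`. -/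
theorem stmt12 {Ω : Type*} [MeasurableSpace Ω] (μ : Measure Ω)
    [IsProbabilityMeasure μ]
    (c : ℕ → Ω → Bool) (hmeas : ∀ k, Measurable (c k))
    (hiid : ProbabilityTheory.iIndepFun c μ)
    (hunif : ∀ k, μ (c k ⁻¹' {true}) = 1 / 2)
    (x y : ℕ → Ω → ℝ)
    (hx0 : ∀ ω, x 0 ω = 0) (hy0 : ∀ ω, y 0 ω = 0)
    (hstep : ∀ k ω, (x (k + 1) ω, y (k + 1) ω) =
      if c k ω then (x k ω - (1 + x k ω - y k ω) / 2, y k ω)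
      else (x k ω, y k ω - (1 + y k ω - x k ω) / 2)) :
    ∀ k : ℕ,
      (∫ ω, x k ω ∂μ) = -(k : ℝ) / 4 ∧
      (∫ ω, y k ω ∂μ) = -(k : ℝ) / 4 ∧
      (∫ ω, (x k ω - y k ω) ^ 2 ∂μ) = (1 / 3) * (1 - (4 : ℝ) ^ (-(k : ℤ))) ∧
      (∫ ω, ((x k ω) ^ 2 + (y k ω) ^ 2) ∂μ)
        = (k : ℝ) ^ 2 / 8 + (k : ℝ) / 24 + (1 / 9) * (1 - (4 : ℝ) ^ (-(k : ℤ))) ∧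
      (∫ ω, ((x k ω) ^ 2 + (y k ω) ^ 2) ∂μ)
          - ((∫ ω, x k ω ∂μ) ^ 2 + (∫ ω, y k ω ∂μ) ^ 2)
        = (k : ℝ) / 24 + (1 / 9) * (1 - (4 : ℝ) ^ (-(k : ℤ))) := by
  intro k
  have hmean (f : ℝ × ℝ → ℝ) : ∫ ω, f (x k ω, y k ω) ∂μ = mean k f := by
    simp_rw [iterate_eq_orbit hx0 hy0 hstep k]
    exact integral_comp_coins hmeas hiid hunif k fun b => f (orbit k b)
  have hx : ∫ ω, x k ω ∂μ = -(k : ℝ) / 4 := (hmean Prod.fst).trans (mean_fst_and_snd k).1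
  have hy : ∫ ω, y k ω ∂μ = -(k : ℝ) / 4 := (hmean Prod.snd).trans (mean_fst_and_snd k).2
  have hd : ∫ ω, (x k ω - y k ω) ^ 2 ∂μ = 1 / 3 * (1 - ((4 : ℝ) ^ k)⁻¹) :=
    (hmean fun p => (p.1 - p.2) ^ 2).trans (mean_sq_sub k)
  have hq : ∫ ω, (x k ω ^ 2 + y k ω ^ 2) ∂μ
      = (k : ℝ) ^ 2 / 8 + k / 24 + 1 / 9 * (1 - ((4 : ℝ) ^ k)⁻¹) :=
    (hmean fun p => p.1 ^ 2 + p.2 ^ 2).trans (mean_sq_add_sq k)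
  simp only [zpow_neg, zpow_natCast]
  refine ⟨hx, hy, hd, hq, ?_⟩
  rw [hq, hx, hy]
  ring
end
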